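/- arXiv:1906.06727 — 2 statements merged into one kernel-verified Lean document; each statement's English description precedes it below -/
import Mathlib

section
/- Let $M_x, K_x$ be $n \times n$ real matrices and $M_y, K_y$ be $m \times m$ real matrices with $M_x, M_y$ invertible, and suppose $K_x = M_x P_x D_x P_x^{-1}$ and $K_y = M_y P_y D_y P_y^{-1}$ where $P_x, P_y$ are invertible and $D_x, D_y$ are diagonal. Let $\eta$ be a real number such that $I + \eta D_x$ and $I + \eta D_y$ are invertible. Set $\tilde{G} = (M_x + \eta K_x) \otimes (M_y + \eta K_y)$ and $\tilde{K} = \eta^2 K_x \otimes K_y$. Then $\tilde{G}$ is invertible and $\tilde{G}^{-1} \tilde{K} = (P_x \otimes P_y) \cdot \big( \eta (I + \eta D_x)^{-1} D_x \otimes \eta (I + \eta D_y)^{-1} D_y \big) \cdot (P_x^{-1} \otimes P_y^{-1})$; in particular $\tilde{G}^{-1}\tilde{K}$ is similar to a diagonal matrix whose diagonal entries are $\frac{\eta^2 \lambda_{x,i}\lambda_{y,j}}{(1+\eta\lambda_{x,i})(1+\eta\lambda_{y,j})}$, where $\lambda_{x,i}$ and $\lambda_{y,j}$ run over the diagonal entries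 of $D_x$ and $D_y$. -/
open Matrix Kronecker

/-!
Writing `K = M P D P⁻¹`, the pencil factors as `M + η K = M P (1 + η D) P⁻¹`, so
`(M + η K)⁻¹ (η K) = P (η (1 + η D)⁻¹ D) P⁻¹` in each direction. Kronecker products commute
with products and inverses, so the two one-dimensional similarities combine into one for
`G̃⁻¹ K̃ = (M_x + η K_x)⁻¹ (η K_x) ⊗ (M_y + η K_y)⁻¹ (η K_y)`.
-/

namespace Matrix

section

variable {R : Type*} [CommRing R] {ι κ : Type*} [Fintype ι] [DecidableEq ι] [Fintype κ]
  [DecidableEq κ]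

theorem isUnit_kronecker {A : Matrix ι ι R} {B : Matrix κ κ R} (hA : IsUnit A) (hB : IsUnit B) :
    IsUnit (A ⊗ₖ B) := by
  rw [isUnit_iff_isUnit_det] at hA hB ⊢
  rw [det_kronecker]
  exact (hA.pow _).mul (hB.pow _)

theorem add_smul_eq_conj_one_add_smul {M P D : Matrix ι ι R} (hP : IsUnit P) (η : R) :
    M + η • (M * P * D * P⁻¹) = M * P * (1 + η • D) * P⁻¹ := by
  have := hP.invertible
  rw [mul_add, mul_one, add_mul, mul_inv_cancel_right_of_invertible, Matrix.mul_smul,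
    smul_mul]

theorem isUnit_add_smul_of_conj {M P D : Matrix ι ι R} (hM : IsUnit M) (hP : IsUnit P) {η : R}
    (hD : IsUnit (1 + η • D)) : IsUnit (M + η • (M * P * D * P⁻¹)) := by
  rw [add_smul_eq_conj_one_add_smul hP]
  exact ((hM.mul hP).mul hD).mul (isUnit_nonsing_inv_iff.mpr hP)

theorem inv_add_smul_mul_smul_of_conj {M P D : Matrix ι ι R} (hM : IsUnit M) (hP : IsUnit P)
    {η : R} (hD : IsUnit (1 + η • D)) :
    (M + η • (M * P * D * P⁻¹))⁻¹ * (η • (M * P * D * P⁻¹)) =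
      P * (η • ((1 + η • D)⁻¹ * D)) * P⁻¹ := by
  have := hP.invertible
  have := hD.invertible
  have := (isUnit_add_smul_of_conj hM hP hD).invertible
  rw [inv_mul_eq_iff_eq_mul_of_invertible, add_smul_eq_conj_one_add_smul hP]
  simp only [Matrix.mul_smul, smul_mul, mul_assoc, inv_mul_cancel_left_of_invertible,
    mul_inv_cancel_left_of_invertible]

end

theorem smul_inv_one_add_smul_diagonal_mul_diagonal {K ι : Type*} [Field K] [Fintype ι]
    [DecidableEq ι] {η : K} {d : ι → K} (hD : IsUnit (1 + η • diagonal d)) :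
    η • ((1 + η • diagonal d)⁻¹ * diagonal d) = diagonal fun i => η * d i / (1 + η * d i) := by
  have hdiag : 1 + η • diagonal d = diagonal fun i => 1 + η * d i := by
    rw [← diagonal_one, ← diagonal_smul, diagonal_add]
    rfl
  have hne (i : ι) : 1 + η * d i ≠ 0 :=
    (Pi.isUnit_iff.mp (isUnit_diagonal.mp (hdiag ▸ hD)) i).ne_zero
  have hinv : (1 + η • diagonal d)⁻¹ = diagonal fun i => (1 + η * d i)⁻¹ := by
    refine inv_eq_left_inv ?_
    rw [hdiag, diagonal_mul_diagonal, ← diagonal_one]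
    exact congrArg diagonal (funext fun i => inv_mul_cancel₀ (hne i))
  rw [hinv, diagonal_mul_diagonal, ← diagonal_smul]
  congr 1
  funext i
  simp only [Pi.smul_apply, smul_eq_mul]
  ring

end Matrix

theorem stmt_2 {n m : ℕ} (Mx Kx Px : Matrix (Fin n) (Fin n) ℝ)
    (My Ky Py : Matrix (Fin m) (Fin m) ℝ)
    (dx : Fin n → ℝ) (dy : Fin m → ℝ)
    (hMx : IsUnit Mx) (hMy : IsUnit My) (hPx : IsUnit Px) (hPy : IsUnit Py)
    (hKx : Kx = Mx * Px * diagonal dx * Px⁻¹)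
    (hKy : Ky = My * Py * diagonal dy * Py⁻¹)
    (η : ℝ)
    (hηx : IsUnit (1 + η • diagonal dx)) (hηy : IsUnit (1 + η • diagonal dy))
    (Gtilde : Matrix (Fin n × Fin m) (Fin n × Fin m) ℝ)
    (Ktilde : Matrix (Fin n × Fin m) (Fin n × Fin m) ℝ)
    (hG : Gtilde = (Mx + η • Kx) ⊗ₖ (My + η • Ky))
    (hKt : Ktilde = η ^ 2 • (Kx ⊗ₖ Ky)) :
    IsUnit Gtilde ∧
      Gtilde⁻¹ * Ktilde =
        (Px ⊗ₖ Py) *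
          ((η • ((1 + η • diagonal dx)⁻¹ * diagonal dx)) ⊗ₖ
            (η • ((1 + η • diagonal dy)⁻¹ * diagonal dy))) *
          (Px⁻¹ ⊗ₖ Py⁻¹) ∧
      (η • ((1 + η • diagonal dx)⁻¹ * diagonal dx)) ⊗ₖ
          (η • ((1 + η • diagonal dy)⁻¹ * diagonal dy)) =
        diagonal (fun p : Fin n × Fin m =>
          η ^ 2 * dx p.1 * dy p.2 / ((1 + η * dx p.1) * (1 + η * dy p.2))) := by
  subst hG hKt hKx hKy
  refine ⟨isUnit_kronecker (isUnit_add_smul_of_conj hMx hPx hηx)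
    (isUnit_add_smul_of_conj hMy hPy hηy), ?_, ?_⟩
  · rw [inv_kronecker, sq, ← smul_smul, ← kronecker_smul, ← smul_kronecker, ← mul_kronecker_mul,
      inv_add_smul_mul_smul_of_conj hMx hPx hηx, inv_add_smul_mul_smul_of_conj hMy hPy hηy,
      mul_kronecker_mul, mul_kronecker_mul]
  · rw [smul_inv_one_add_smul_diagonal_mul_diagonal hηx,
      smul_inv_one_add_smul_diagonal_mul_diagonal hηy,
      diagonal_kronecker_diagonal]
    congr 1
    funext p
    rw [div_mul_div_comm]
    ring
end

section
/- Let $M_x, K_x, M_y, K_y, P_x, P_y, D_x, D_y, \eta, \tilde{G}, \tilde{K}$ be as follows: $M_x, M_y$ invertible real matrices, $K_x = M_x P_x D_x P_x^{-1}$, $K_y = M_y P_y D_y P_y^{-1}$ with $P_x, P_y$ invertible and $D_x, D_y$ diagonal, $\eta$ real with $I + \eta D_x$ and $I + \eta D_y$ invertible, $\tilde{G} = (M_x + \eta K_x) \otimes (M_y + \eta K_y)$ and $\tilde{K} = \eta^2 K_x \otimes K_y$. Then every eigenvalue $\lambda$ of the matrix $\tilde{G}^{-1}\tilde{K}$ (over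 $\mathbb{R}$) is of the form $\lambda = \frac{\eta^2 \lambda_{x,i} \lambda_{y,j}}{(1 + \eta \lambda_{x,i})(1 + \eta \lambda_{y,j})}$ for some diagonal entries $\lambda_{x,i}$ of $D_x$ and $\lambda_{y,j}$ of $D_y$. -/
/-!
Since `Kx = Mx Px Dx Px⁻¹`, the first Kronecker factor of `G̃` is `Mx Px (1 + η Dx) Px⁻¹`, so
`(Mx + η Kx)⁻¹ (η Kx) = Px diag(η λx,i / (1 + η λx,i)) Px⁻¹`, and likewise in `y`.
Hence `G̃⁻¹ K̃`, the Kronecker product of these two matrices, is conjugate by `Px ⊗ Py` to the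
diagonal matrix of products of their entries, and those are its only eigenvalues.
-/

open Matrix Kronecker

namespace Matrix

theorem one_add_smul_diagonal {ι R : Type*} [DecidableEq ι] [Semiring R] (η : R) (d : ι → R) :
    1 + η • diagonal d = diagonal (fun i => 1 + η * d i) := by
  rw [← diagonal_one, ← diagonal_smul, diagonal_add]
  rfl

section CommRing

variable {ι R : Type*} [Fintype ι] [DecidableEq ι] [CommRing R]

theorem add_smul_conj (M P A : Matrix ι ι R) (hP : IsUnit P) (η : R) :
    M + η • (M * P * A * P⁻¹) = M * P * (1 + η • A) * P⁻¹ := by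
  have hPP : M * P * P⁻¹ = M := by
    rw [Matrix.mul_assoc, mul_nonsing_inv _ ((isUnit_iff_isUnit_det P).mp hP), Matrix.mul_one]
  rw [Matrix.mul_add, Matrix.add_mul, Matrix.mul_one, hPP, Matrix.mul_smul, Matrix.smul_mul]

theorem inv_conj_mul_conj {M P : Matrix ι ι R} (hM : IsUnit M) (hP : IsUnit P)
    (A B : Matrix ι ι R) :
    (M * P * A * P⁻¹)⁻¹ * (M * P * B * P⁻¹) = P * (A⁻¹ * B) * P⁻¹ := by
  rw [isUnit_iff_isUnit_det] at hM hP
  simp only [mul_inv_rev, nonsing_inv_nonsing_inv _ hP, Matrix.mul_assoc]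
  simp only [← Matrix.mul_assoc M⁻¹ M, nonsing_inv_mul _ hM, Matrix.one_mul,
    ← Matrix.mul_assoc P⁻¹ P, nonsing_inv_mul _ hP, ← Matrix.mul_assoc A⁻¹ B]

theorem conj_diagonal_kronecker_conj_diagonal {κ : Type*} [Fintype κ] [DecidableEq κ]
    (P : Matrix ι ι R) (Q : Matrix κ κ R) (a : ι → R) (b : κ → R) :
    (P * diagonal a * P⁻¹) ⊗ₖ (Q * diagonal b * Q⁻¹) =
      (P ⊗ₖ Q) * diagonal (fun p => a p.1 * b p.2) * (P ⊗ₖ Q)⁻¹ := by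
  rw [inv_kronecker, mul_kronecker_mul, mul_kronecker_mul, diagonal_kronecker_diagonal]

theorem exists_eq_of_conj_diagonal_mulVec_eq_smul [IsDomain R] {P : Matrix ι ι R}
    (hP : IsUnit P) (w : ι → R) {lam : R} {v : ι → R} (hv : v ≠ 0)
    (h : (P * diagonal w * P⁻¹) *ᵥ v = lam • v) : ∃ i, lam = w i := by
  have hPd := (isUnit_iff_isUnit_det P).mp hP
  have hvec : Module.End.HasEigenvector (toLin' (diagonal w)) lam (P⁻¹ *ᵥ v) := by
    refine ⟨Module.End.mem_eigenspace_iff.mpr ?_, fun h0 => hv ?_⟩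
    · simpa [toLin'_apply, mulVec_mulVec, mulVec_smul, ← Matrix.mul_assoc,
        nonsing_inv_mul _ hPd] using congrArg (P⁻¹ *ᵥ ·) h
    · simpa [mulVec_mulVec, mul_nonsing_inv _ hPd] using congrArg (P *ᵥ ·) h0
  obtain ⟨i, hi⟩ :=
    (hasEigenvalue_toLin'_diagonal_iff w).mp (Module.End.hasEigenvalue_of_hasEigenvector hvec)
  exact ⟨i, hi.symm⟩

end CommRing

section Field

variable {ι K : Type*} [Fintype ι] [DecidableEq ι] [Field K]

theorem inv_one_add_smul_diagonal_mul_smul_diagonal {η : K} {d : ι → K}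
    (h : IsUnit (1 + η • diagonal d)) :
    (1 + η • diagonal d)⁻¹ * (η • diagonal d) = diagonal (fun i => η * d i / (1 + η * d i)) := by
  have := h.invertible
  rw [inv_mul_eq_iff_eq_mul_of_invertible, one_add_smul_diagonal, diagonal_mul_diagonal,
    ← diagonal_smul]
  rw [one_add_smul_diagonal, isUnit_diagonal, Pi.isUnit_iff] at h
  congr 1
  ext i
  rw [mul_div_cancel₀ _ (h i).ne_zero]
  rfl

theorem inv_add_smul_conj_diagonal_mul_smul {M P : Matrix ι ι K} (hM : IsUnit M) (hP : IsUnit P)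
    {η : K} {d : ι → K} (h : IsUnit (1 + η • diagonal d)) :
    (M + η • (M * P * diagonal d * P⁻¹))⁻¹ * (η • (M * P * diagonal d * P⁻¹)) =
      P * diagonal (fun i => η * d i / (1 + η * d i)) * P⁻¹ := by
  rw [add_smul_conj M P _ hP, ← inv_one_add_smul_diagonal_mul_smul_diagonal h,
    ← inv_conj_mul_conj hM hP]
  simp only [Matrix.mul_smul, Matrix.smul_mul]

end Field

end Matrix

theorem stmt_3 {n m : ℕ} (Mx Kx Px : Matrix (Fin n) (Fin n) ℝ)
    (My Ky Py : Matrix (Fin m) (Fin m) ℝ)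
    (dx : Fin n → ℝ) (dy : Fin m → ℝ)
    (hMx : IsUnit Mx) (hMy : IsUnit My) (hPx : IsUnit Px) (hPy : IsUnit Py)
    (hKx : Kx = Mx * Px * diagonal dx * Px⁻¹)
    (hKy : Ky = My * Py * diagonal dy * Py⁻¹)
    (η : ℝ)
    (hηx : IsUnit (1 + η • diagonal dx)) (hηy : IsUnit (1 + η • diagonal dy))
    (Gtilde : Matrix (Fin n × Fin m) (Fin n × Fin m) ℝ)
    (Ktilde : Matrix (Fin n × Fin m) (Fin n × Fin m) ℝ)
    (hG : Gtilde = (Mx + η • Kx) ⊗ₖ (My + η • Ky))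
    (hKt : Ktilde = η ^ 2 • (Kx ⊗ₖ Ky))
    (lam : ℝ) (v : Fin n × Fin m → ℝ) (hv : v ≠ 0)
    (heig : (Gtilde⁻¹ * Ktilde).mulVec v = lam • v) :
    ∃ (i : Fin n) (j : Fin m),
      lam = η ^ 2 * dx i * dy j / ((1 + η * dx i) * (1 + η * dy j)) := by
  have hconj : Gtilde⁻¹ * Ktilde = (Px ⊗ₖ Py) * diagonal (fun p =>
      η * dx p.1 / (1 + η * dx p.1) * (η * dy p.2 / (1 + η * dy p.2))) * (Px ⊗ₖ Py)⁻¹ := by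
    rw [hG, hKt, pow_two, mul_smul, ← kronecker_smul, ← smul_kronecker, inv_kronecker,
      ← mul_kronecker_mul, hKx, hKy, inv_add_smul_conj_diagonal_mul_smul hMx hPx hηx,
      inv_add_smul_conj_diagonal_mul_smul hMy hPy hηy, conj_diagonal_kronecker_conj_diagonal]
  obtain ⟨⟨i, j⟩, hij⟩ :=
    exists_eq_of_conj_diagonal_mulVec_eq_smul (hPx.kronecker hPy) _ hv (hconj ▸ heig)
  exact ⟨i, j, by rw [hij, div_mul_div_comm]; ring⟩
end
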